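/- Let E be a measurable space, μ a probability measure on E, and X_1, X_2, … independent E-valued random variables each with law μ. Let F be a countable family of measurable functions from E to [−1,1], let n ≥ 1, let δ ∈ (0,1), and suppose there exist m measurable functions g_1, …, g_m : E → [−1,1] forming a √(2/n)-net for F in the uniform norm. Then with probability at least 1 − δ, sup_{f∈F} |(1/n)∑_{i=1}^n f(X_i) − ∫_E f dμ| ≤ √((128/n)·(ln m + ln(8/δ))). -/

import Mathlib

/-!
Put `L = log m + log (8 / δ)` and `t = √(128 L / n)`. Hoeffding's inequality for the
`[-1, 1]`-valued `g j` gives `P(|p_n(g j) - p(g j)| ≥ t / 2) ≤ 2 exp (-n t² / 8) = 2 exp (-16 L)`,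
so by a union bound all `m` of these deviations are below `t / 2` outside an event of probability
at most `2 m exp (-16 L) ≤ 2 m exp (-L) ≤ δ / 4`. Replacing `f` by a uniformly `ε`-close `g j`
moves both `p_n` and `p` by at most `ε = √(2 / n)`, and `2 ε ≤ t / 2` since `L ≥ log (8 / δ) ≥ 1`.
-/

open MeasureTheory ProbabilityTheory Real
open scoped NNReal

namespace ProbabilityTheory

variable {Ω : Type*} [MeasurableSpace Ω] {P : Measure Ω}

lemma measureReal_le_abs_sum_range_le_of_iIndepFun [IsFiniteMeasure P] {Y : ℕ → Ω → ℝ}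
    (h_indep : iIndepFun Y P) {c : ℝ≥0} {n : ℕ} (h_subG : ∀ i < n, HasSubgaussianMGF (Y i) c P)
    {ε : ℝ} (hε : 0 ≤ ε) :
    P.real {ω | ε ≤ |∑ i ∈ Finset.range n, Y i ω|} ≤ 2 * exp (-ε ^ 2 / (2 * n * c)) := by
  have h_indep_neg : iIndepFun (fun i ω ↦ -Y i ω) P :=
    h_indep.comp (fun _ x ↦ -x) fun _ ↦ measurable_neg
  have h_subset : {ω | ε ≤ |∑ i ∈ Finset.range n, Y i ω|} ⊆
      {ω | ε ≤ ∑ i ∈ Finset.range n, Y i ω} ∪ {ω | ε ≤ ∑ i ∈ Finset.range n, -Y i ω} := by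
    intro ω hω
    rw [Set.mem_union, Set.mem_ofPred_eq, Set.mem_ofPred_eq, Finset.sum_neg_distrib]
    exact le_abs.mp hω
  calc P.real {ω | ε ≤ |∑ i ∈ Finset.range n, Y i ω|}
      ≤ P.real {ω | ε ≤ ∑ i ∈ Finset.range n, Y i ω}
        + P.real {ω | ε ≤ ∑ i ∈ Finset.range n, -Y i ω} :=
        (measureReal_mono h_subset).trans (measureReal_union_le _ _)
    _ ≤ exp (-ε ^ 2 / (2 * n * c)) + exp (-ε ^ 2 / (2 * n * c)) := by
        gcongr
        · exact HasSubgaussianMGF.measure_sum_range_ge_le_of_iIndepFun h_indep h_subG hε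
        · exact HasSubgaussianMGF.measure_sum_range_ge_le_of_iIndepFun h_indep_neg
            (fun i hi ↦ (h_subG i hi).neg) hε
    _ = 2 * exp (-ε ^ 2 / (2 * n * c)) := by ring

end ProbabilityTheory

section EmpiricalMean

variable {Ω E : Type*}

noncomputable def empiricalMean (X : ℕ → Ω → E) (n : ℕ) (f : E → ℝ) (ω : Ω) : ℝ :=
  (1 / (n : ℝ)) * ∑ k ∈ Finset.range n, f (X k ω)

variable {X : ℕ → Ω → E} {n : ℕ}

lemma empiricalMean_sub_const (hn : n ≠ 0) (f : E → ℝ) (c : ℝ) (ω : Ω) :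
    empiricalMean X n f ω - c = (1 / (n : ℝ)) * ∑ k ∈ Finset.range n, (f (X k ω) - c) := by
  rw [empiricalMean, Finset.sum_sub_distrib, Finset.sum_const, Finset.card_range, nsmul_eq_mul]
  field_simp

lemma abs_empiricalMean_sub_le (hn : n ≠ 0) {f g : E → ℝ} {ε : ℝ}
    (hfg : ∀ x, |f x - g x| ≤ ε) (ω : Ω) : |empiricalMean X n f ω - empiricalMean X n g ω| ≤ ε := by
  have hn' : (0 : ℝ) < n := by positivity
  calc |empiricalMean X n f ω - empiricalMean X n g ω|
      = (1 / (n : ℝ)) * |∑ k ∈ Finset.range n, (f (X k ω) - g (X k ω))| := by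
        rw [empiricalMean, empiricalMean, ← mul_sub, ← Finset.sum_sub_distrib, abs_mul,
          abs_of_pos (by positivity)]
    _ ≤ (1 / (n : ℝ)) * ∑ _k ∈ Finset.range n, ε := by
        gcongr
        exact (Finset.abs_sum_le_sum_abs _ _).trans (Finset.sum_le_sum fun k _ ↦ hfg (X k ω))
    _ = ε := by
        rw [Finset.sum_const, Finset.card_range, nsmul_eq_mul]
        field_simp

section Approximation

variable [MeasurableSpace E] {μ : Measure E} [IsProbabilityMeasure μ]

lemma abs_integral_sub_integral_le {f g : E → ℝ} (hf : Integrable f μ) (hg : Integrable g μ)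
    {ε : ℝ} (hfg : ∀ x, |f x - g x| ≤ ε) : |∫ x, f x ∂μ - ∫ x, g x ∂μ| ≤ ε := by
  rw [← integral_sub hf hg]
  simpa using norm_integral_le_of_norm_le_const (f := fun x ↦ f x - g x) (ae_of_all μ hfg)

lemma abs_empiricalMean_sub_integral_le_of_abs_sub_le (hn : n ≠ 0) {f g : E → ℝ}
    (hf : Integrable f μ) (hg : Integrable g μ) {ε : ℝ} (hfg : ∀ x, |f x - g x| ≤ ε) (ω : Ω) :
    |empiricalMean X n f ω - ∫ x, f x ∂μ| ≤ |empiricalMean X n g ω - ∫ x, g x ∂μ| + 2 * ε := by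
  have h_emp := abs_empiricalMean_sub_le (X := X) hn hfg ω
  have h_int := abs_integral_sub_integral_le hf hg hfg
  calc |empiricalMean X n f ω - ∫ x, f x ∂μ|
      = |(empiricalMean X n g ω - ∫ x, g x ∂μ) + (empiricalMean X n f ω - empiricalMean X n g ω)
          - (∫ x, f x ∂μ - ∫ x, g x ∂μ)| := by congr 1; ring
    _ ≤ |empiricalMean X n g ω - ∫ x, g x ∂μ| + ε + ε :=
        (abs_sub _ _).trans (add_le_add ((abs_add_le _ _).trans (by gcongr)) h_int)
    _ = |empiricalMean X n g ω - ∫ x, g x ∂μ| + 2 * ε := by ring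

lemma iSup_abs_empiricalMean_sub_integral_le_of_net (hn : n ≠ 0) {ι κ : Type*}
    {F : ι → E → ℝ} {g : κ → E → ℝ} (hF : ∀ i, Integrable (F i) μ) (hg : ∀ j, Integrable (g j) μ)
    {ε : ℝ} (hnet : ∀ i, ∃ j, ∀ x, |F i x - g j x| ≤ ε) {s t : ℝ} (hst : s + 2 * ε ≤ t)
    (ht : 0 ≤ t) {ω : Ω} (hω : ∀ j, |empiricalMean X n (g j) ω - ∫ x, g j x ∂μ| ≤ s) :
    ⨆ i, |empiricalMean X n (F i) ω - ∫ x, F i x ∂μ| ≤ t := by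
  refine Real.iSup_le (fun i ↦ ?_) ht
  obtain ⟨j, hj⟩ := hnet i
  calc |empiricalMean X n (F i) ω - ∫ x, F i x ∂μ|
      ≤ |empiricalMean X n (g j) ω - ∫ x, g j x ∂μ| + 2 * ε :=
        abs_empiricalMean_sub_integral_le_of_abs_sub_le hn (hF i) (hg j) hj ω
    _ ≤ t := by linarith [hω j]

end Approximation

variable [MeasurableSpace Ω] [MeasurableSpace E] {P : Measure Ω} [IsProbabilityMeasure P]
  {μ : Measure E}

lemma hasSubgaussianMGF_comp_sub_integral {Y : Ω → E}
    (hY : Measurable Y) (hlaw : P.map Y = μ) {g : E → ℝ} (hg : Measurable g) {a b : ℝ}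
    (hgab : ∀ x, g x ∈ Set.Icc a b) :
    HasSubgaussianMGF (fun ω ↦ g (Y ω) - ∫ x, g x ∂μ) ((‖b - a‖₊ / 2) ^ 2) P := by
  have h := hasSubgaussianMGF_of_mem_Icc (hg.comp hY).aemeasurable
    (ae_of_all P fun ω ↦ hgab (Y ω))
  rwa [← hlaw, integral_map hY.aemeasurable hg.aestronglyMeasurable]

lemma measureReal_le_abs_empiricalMean_sub_integral_le
    (hX : ∀ k, Measurable (X k)) (h_indep : iIndepFun X P) (hlaw : ∀ k, P.map (X k) = μ)
    {g : E → ℝ} (hg : Measurable g) {a b : ℝ} (hgab : ∀ x, g x ∈ Set.Icc a b)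
    (hn : n ≠ 0) {s : ℝ} (hs : 0 ≤ s) :
    P.real {ω | s ≤ |empiricalMean X n g ω - ∫ x, g x ∂μ|}
      ≤ 2 * exp (-2 * n * s ^ 2 / (b - a) ^ 2) := by
  have hn' : (0 : ℝ) < n := by positivity
  have h_indep' : iIndepFun (fun k ω ↦ g (X k ω) - ∫ x, g x ∂μ) P :=
    h_indep.comp (fun _ x ↦ g x - ∫ x, g x ∂μ) fun _ ↦ hg.sub_const _
  have h_event : {ω | s ≤ |empiricalMean X n g ω - ∫ x, g x ∂μ|}
      = {ω | n * s ≤ |∑ k ∈ Finset.range n, (g (X k ω) - ∫ x, g x ∂μ)|} := by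
    ext ω
    rw [Set.mem_ofPred_eq, Set.mem_ofPred_eq, empiricalMean_sub_const hn, abs_mul,
      abs_of_pos (by positivity), one_div_mul_eq_div, le_div_iff₀' hn']
  have h_const : (((‖b - a‖₊ / 2) ^ 2 : ℝ≥0) : ℝ) = (b - a) ^ 2 / 4 := by
    push_cast
    rw [norm_eq_abs, div_pow, sq_abs]
    norm_num
  rw [h_event]
  refine (measureReal_le_abs_sum_range_le_of_iIndepFun h_indep'
    (fun k _ ↦ hasSubgaussianMGF_comp_sub_integral (hX k) (hlaw k) hg hgab)
    (by positivity)).trans_eq ?_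
  rw [h_const]
  rcases eq_or_ne (b - a) 0 with hab | hab
  · simp [hab]
  · congr 2
    field_simp
    ring

end EmpiricalMean

lemma ofReal_one_sub_le_of_compl_subset_iUnion {Ω κ : Type*} [MeasurableSpace Ω] [Fintype κ]
    {P : Measure Ω} [IsProbabilityMeasure P] {T : Set Ω} {B : κ → Set Ω} (hT : Tᶜ ⊆ ⋃ j, B j)
    {δ : ℝ} (hB : ∑ j, P.real (B j) ≤ δ) : ENNReal.ofReal (1 - δ) ≤ P T := by
  refine ENNReal.ofReal_le_of_le_toReal ?_
  have h_univ : 1 ≤ P.real T + P.real Tᶜ := by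
    simpa [Set.union_compl_self] using measureReal_union_le (μ := P) T Tᶜ
  have h_compl : P.real Tᶜ ≤ δ :=
    (measureReal_mono hT).trans ((measureReal_iUnion_fintype_le B).trans hB)
  change 1 - δ ≤ P.real T
  linarith

lemma one_le_log_eight_div {δ : ℝ} (hδ : 0 < δ) (hδ1 : δ < 1) : 1 ≤ log (8 / δ) := by
  rw [le_log_iff_exp_le (by positivity), le_div_iff₀ hδ]
  nlinarith [exp_one_lt_d9]

lemma natCast_mul_exp_neg_log_add_log_le (m : ℕ) {y : ℝ} (hy : 0 < y) :
    m * exp (-(log m + log y)) ≤ 1 / y := by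
  rcases Nat.eq_zero_or_pos m with rfl | hm
  · simp [hy.le]
  · rw [neg_add, exp_add, exp_neg, exp_neg, exp_log (by positivity), exp_log hy, ← mul_assoc,
      mul_inv_cancel₀ (by positivity), one_mul, one_div]

lemma natCast_mul_two_mul_exp_neg_sixteen_mul_le (m : ℕ) {δ : ℝ} (hδ : 0 < δ)
    (hL : 0 ≤ log m + log (8 / δ)) : m * (2 * exp (-16 * (log m + log (8 / δ)))) ≤ δ := by
  calc m * (2 * exp (-16 * (log m + log (8 / δ))))
      ≤ 2 * (m * exp (-(log m + log (8 / δ)))) := by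
        rw [mul_left_comm]
        gcongr
        linarith
    _ ≤ 2 * (1 / (8 / δ)) := by
        gcongr
        exact natCast_mul_exp_neg_log_add_log_le m (by positivity)
    _ ≤ δ := by
        rw [one_div_div]
        linarith

lemma four_mul_sqrt_two_div_le (n : ℕ) {L : ℝ} (hL : 1 / 4 ≤ L) :
    4 * √(2 / n) ≤ √(128 / n * L) := by
  rw [show (4 : ℝ) = √16 by rw [show (16 : ℝ) = 4 ^ 2 by norm_num, sqrt_sq (by norm_num)],
    ← sqrt_mul (by norm_num)]
  refine sqrt_le_sqrt ?_
  rw [div_mul_eq_mul_div, mul_div_assoc', show (16 : ℝ) * 2 = 128 * (1 / 4) by norm_num]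
  gcongr

lemma hoeffding_exponent_eq {n : ℕ} (hn : n ≠ 0) {L : ℝ} (hL : 0 ≤ L) :
    -2 * n * (√(128 / n * L) / 2) ^ 2 / (1 - -1) ^ 2 = -16 * L := by
  rw [div_pow, sq_sqrt (by positivity)]
  field_simp
  ring

theorem stmt4_general {E Ω : Type*} [MeasurableSpace E] [MeasurableSpace Ω]
    (μ : Measure E) [IsProbabilityMeasure μ]
    (P : Measure Ω) [IsProbabilityMeasure P]
    (X : ℕ → Ω → E) (hXmeas : ∀ i, Measurable (X i))
    (hindep : ProbabilityTheory.iIndepFun X P)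
    (hlaw : ∀ i, Measure.map (X i) P = μ)
    {ι : Type*} (F : ι → E → ℝ)
    (hFmeas : ∀ i, Measurable (F i))
    (hFbdd : ∀ i x, F i x ∈ Set.Icc (-1 : ℝ) 1)
    (n : ℕ) (hn : 1 ≤ n) (δ : ℝ) (hδ : 0 < δ) (hδ1 : δ < 1)
    (m : ℕ) (g : Fin m → E → ℝ)
    (hgmeas : ∀ j, Measurable (g j))
    (hgbdd : ∀ j x, g j x ∈ Set.Icc (-1 : ℝ) 1)
    (hnet : ∀ i : ι, ∃ j : Fin m, ∀ x : E,
      |F i x - g j x| ≤ Real.sqrt (2 / (n : ℝ))) :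
    ENNReal.ofReal (1 - δ) ≤
      P {ω : Ω |
        (⨆ i : ι, |(1 / (n : ℝ)) * ∑ k ∈ Finset.range n, F i (X k ω) - ∫ x, F i x ∂μ|)
          ≤ Real.sqrt ((128 / (n : ℝ)) * (Real.log m + Real.log (8 / δ)))} := by
  have hn0 : n ≠ 0 := by omega
  set L := log m + log (8 / δ)
  set t := √(128 / n * L)
  have hL : 1 ≤ L := by linarith [log_natCast_nonneg m, one_le_log_eight_div hδ hδ1]
  refine ofReal_one_sub_le_of_compl_subset_iUnion
    (B := fun j ↦ {ω | t / 2 ≤ |empiricalMean X n (g j) ω - ∫ x, g j x ∂μ|}) ?_ ?_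
  · intro ω hω
    by_contra h_good
    simp only [Set.mem_iUnion, Set.mem_ofPred_eq, not_exists, not_le] at h_good
    refine hω (iSup_abs_empiricalMean_sub_integral_le_of_net hn0
      (fun i ↦ Integrable.of_mem_Icc (-1) 1 (hFmeas i).aemeasurable (ae_of_all _ (hFbdd i)))
      (fun j ↦ Integrable.of_mem_Icc (-1) 1 (hgmeas j).aemeasurable (ae_of_all _ (hgbdd j)))
      hnet ?_ (sqrt_nonneg _) (fun j ↦ (h_good j).le))
    linarith [four_mul_sqrt_two_div_le n (L := L) (by linarith)]
  · calc ∑ j, P.real {ω | t / 2 ≤ |empiricalMean X n (g j) ω - ∫ x, g j x ∂μ|}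
        ≤ ∑ _j : Fin m, 2 * exp (-16 * L) := Finset.sum_le_sum fun j _ ↦
          (measureReal_le_abs_empiricalMean_sub_integral_le hXmeas hindep hlaw (hgmeas j)
            (hgbdd j) hn0 (by positivity)).trans_eq
            (by rw [hoeffding_exponent_eq hn0 (by linarith)])
      _ = m * (2 * exp (-16 * L)) := by simp
      _ ≤ δ := natCast_mul_two_mul_exp_neg_sixteen_mul_le m hδ (by linarith)

/-- (High-probability empirical process bound.)
If `X_1, X_2, …` are i.i.d. with law `μ`, `F` is a countable family of measurable
functions to `[−1,1]`, `n ≥ 1`, `δ ∈ (0,1)`, and `g_1,…,g_m` is a `√(2/n)`-net for `F`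
in the uniform norm, then with probability at least `1 − δ`,
`sup_{f∈F} |(1/n)∑_{i=1}^n f(X_i) − ∫ f dμ| ≤ √((128/n)·(ln m + ln(8/δ)))`. -/
theorem stmt4 {E Ω : Type*} [MeasurableSpace E] [MeasurableSpace Ω]
    (μ : Measure E) [IsProbabilityMeasure μ]
    (P : Measure Ω) [IsProbabilityMeasure P]
    (X : ℕ → Ω → E) (hXmeas : ∀ i, Measurable (X i))
    (hindep : ProbabilityTheory.iIndepFun X P)
    (hlaw : ∀ i, Measure.map (X i) P = μ)
    {ι : Type*} [Countable ι] (F : ι → E → ℝ)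
    (hFmeas : ∀ i, Measurable (F i))
    (hFbdd : ∀ i x, F i x ∈ Set.Icc (-1 : ℝ) 1)
    (n : ℕ) (hn : 1 ≤ n) (δ : ℝ) (hδ : 0 < δ) (hδ1 : δ < 1)
    (m : ℕ) (g : Fin m → E → ℝ)
    (hgmeas : ∀ j, Measurable (g j))
    (hgbdd : ∀ j x, g j x ∈ Set.Icc (-1 : ℝ) 1)
    (hnet : ∀ i : ι, ∃ j : Fin m, ∀ x : E,
      |F i x - g j x| ≤ Real.sqrt (2 / (n : ℝ))) :
    ENNReal.ofReal (1 - δ) ≤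
      P {ω : Ω |
        (⨆ i : ι, |(1 / (n : ℝ)) * ∑ k ∈ Finset.range n, F i (X k ω) - ∫ x, F i x ∂μ|)
          ≤ Real.sqrt ((128 / (n : ℝ)) * (Real.log m + Real.log (8 / δ)))} :=
  stmt4_general μ P X hXmeas hindep hlaw F hFmeas hFbdd n hn δ hδ hδ1 m g hgmeas hgbdd hnet
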